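/- The improper integral ∫₀^∞ [ z/((1+2z)(z+1)²) + arctan(z/√(1+2z))/(1+2z)^{3/2} ] dz equals 1. -/

import Mathlib

open MeasureTheory Filter Topology Real

/-! The integrand is the derivative of
`F z = -(z + 1)⁻¹ - arctan (z / √(1 + 2z)) / √(1 + 2z)`; it is nonnegative on `(0, ∞)` and
`F` tends to `0` at infinity, so the integral is `0 - F 0 = 1`. -/

lemma hasDerivAt_sqrt_one_add_two_mul {x : ℝ} (hx : 1 + 2 * x ≠ 0) :
    HasDerivAt (fun z => √(1 + 2 * z)) (√(1 + 2 * x))⁻¹ x := by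
  refine ((hasDerivAt_sqrt hx).comp x (((hasDerivAt_id x).const_mul 2).const_add 1)).congr_deriv ?_
  simp

lemma hasDerivAt_div_sqrt_one_add_two_mul {x : ℝ} (hx : 0 < 1 + 2 * x) :
    HasDerivAt (fun z => z / √(1 + 2 * z)) ((1 + x) / √(1 + 2 * x) ^ 3) x := by
  have hsq := sq_sqrt hx.le
  have hs := (sqrt_pos.mpr hx).ne'
  refine ((hasDerivAt_id' x).div (hasDerivAt_sqrt_one_add_two_mul hx.ne') hs).congr_deriv ?_
  generalize √(1 + 2 * x) = s at hs hsq ⊢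
  field_simp
  linear_combination hsq

lemma hasDerivAt_arctan_div_sqrt_one_add_two_mul {x : ℝ} (hx : 0 < 1 + 2 * x) :
    HasDerivAt (fun z => arctan (z / √(1 + 2 * z))) ((√(1 + 2 * x) * (x + 1))⁻¹) x := by
  have hsq := sq_sqrt hx.le
  have hs := (sqrt_pos.mpr hx).ne'
  have hx1 : x + 1 ≠ 0 := by linarith
  refine ((hasDerivAt_arctan _).comp x (hasDerivAt_div_sqrt_one_add_two_mul hx)).congr_deriv ?_
  generalize √(1 + 2 * x) = s at hs hsq ⊢
  field_simp
  linear_combination -hsq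

noncomputable def splitChargeIntegrand (z : ℝ) : ℝ :=
  z / ((1 + 2 * z) * (z + 1) ^ 2) + arctan (z / √(1 + 2 * z)) / (1 + 2 * z) ^ ((3 : ℝ) / 2)

noncomputable def splitChargePrimitive (z : ℝ) : ℝ :=
  -(z + 1)⁻¹ - arctan (z / √(1 + 2 * z)) / √(1 + 2 * z)

lemma hasDerivAt_splitChargePrimitive {x : ℝ} (hx : 0 < 1 + 2 * x) :
    HasDerivAt splitChargePrimitive (splitChargeIntegrand x) x := by
  have hsq := sq_sqrt hx.le
  have hs := (sqrt_pos.mpr hx).ne'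
  have hx1 : x + 1 ≠ 0 := by linarith
  refine ((((hasDerivAt_id' x).add_const 1).inv hx1).neg.sub
    ((hasDerivAt_arctan_div_sqrt_one_add_two_mul hx).div
      (hasDerivAt_sqrt_one_add_two_mul hx.ne') hs)).congr_deriv ?_
  have hrpow : (1 + 2 * x) ^ ((3 : ℝ) / 2) = √(1 + 2 * x) ^ 3 := by
    rw [rpow_div_two_eq_sqrt _ hx.le]
    norm_cast
  rw [splitChargeIntegrand, hrpow]
  -- `1 / (x + 1) ^ 2 - 1 / ((1 + 2x) (x + 1)) = x / ((1 + 2x) (x + 1) ^ 2)`; the arctan terms match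
  generalize √(1 + 2 * x) = s at hs hsq ⊢
  rw [← hsq]
  field_simp
  linear_combination s * hsq

lemma splitChargeIntegrand_nonneg {x : ℝ} (hx : 0 ≤ x) : 0 ≤ splitChargeIntegrand x := by
  have harctan : 0 ≤ arctan (x / √(1 + 2 * x)) := arctan_nonneg.mpr (by positivity)
  rw [splitChargeIntegrand]
  positivity

lemma tendsto_arctan_div_of_tendsto_atTop {α : Type*} {l : Filter α} {f g : α → ℝ}
    (hg : Tendsto g l atTop) : Tendsto (fun a => arctan (f a) / g a) l (𝓝 0) := by
  have hbdd : IsBoundedUnder (· ≤ ·) l (fun a => ‖arctan (f a)‖) :=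
    isBoundedUnder_of ⟨π / 2, fun a => abs_le.mpr
      ⟨(neg_pi_div_two_lt_arctan _).le, (arctan_lt_pi_div_two _).le⟩⟩
  simpa only [div_eq_mul_inv, Pi.inv_apply] using
    isBoundedUnder_le_mul_tendsto_zero hbdd hg.inv_tendsto_atTop

lemma tendsto_splitChargePrimitive_atTop : Tendsto splitChargePrimitive atTop (𝓝 0) := by
  have hsqrt : Tendsto (fun z : ℝ => √(1 + 2 * z)) atTop atTop :=
    tendsto_sqrt_atTop.comp (tendsto_atTop_add_const_left _ 1
      (tendsto_id.const_mul_atTop two_pos))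
  have hinv : Tendsto (fun z : ℝ => (z + 1)⁻¹) atTop (𝓝 0) :=
    (tendsto_atTop_add_const_right _ 1 tendsto_id).inv_tendsto_atTop
  have := hinv.neg.sub
    (tendsto_arctan_div_of_tendsto_atTop (f := fun z => z / √(1 + 2 * z)) hsqrt)
  rwa [neg_zero, sub_zero] at this

theorem split_charge_final_integral :
    ∫ z in Set.Ioi (0 : ℝ),
      (z / ((1 + 2 * z) * (z + 1) ^ 2) +
        Real.arctan (z / Real.sqrt (1 + 2 * z)) / (1 + 2 * z) ^ ((3 : ℝ) / 2)) = 1 := by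
  change ∫ z in Set.Ioi (0 : ℝ), splitChargeIntegrand z = 1
  rw [integral_Ioi_of_hasDerivAt_of_nonneg'
    (fun x hx => hasDerivAt_splitChargePrimitive (by linarith [hx.out]))
    (fun x hx => splitChargeIntegrand_nonneg hx.out.le) tendsto_splitChargePrimitive_atTop]
  norm_num [splitChargePrimitive]
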